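/- Let σ be convex, C¹ and Lipschitz with σ* strictly convex on dom σ* (in the sense that for p ≠ p₀ and y ∈ ∂σ*(p₀), ⟨y, p-p₀⟩ < σ*(p) - σ*(p₀)), and let H(t,·) be strictly concave for a.e. t ∈ (0,T) and C¹ in p. Let p₀ = ∇σ(y) ∈ ℓ(t₀,x₀) and x(t) = x₀ + ∫_{t₀}^t H_p(τ,p₀)dτ. Then ℓ(t, x(t)) = {p₀} for all t ∈ [0, t₀). -/

import Mathlib

local notation "⟪" x ", " y "⟫" => @inner ℝ _ _ x y

/-- The Fenchel (Legendre) conjugate of `σ`, with values in `EReal`. -/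
noncomputable def fenchelConj {n : ℕ} (σ : EuclideanSpace ℝ (Fin n) → ℝ)
    (q : EuclideanSpace ℝ (Fin n)) : EReal :=
  ⨆ x : EuclideanSpace ℝ (Fin n), ((⟪x, q⟫ - σ x : ℝ) : EReal)

/-- The Hopf functional `φ(t,x,q) = ⟨x,q⟩ - σ*(q) - ∫₀ᵗ H(τ,q) dτ` (`EReal`-valued). -/
noncomputable def hopfPhi {n : ℕ} (σ : EuclideanSpace ℝ (Fin n) → ℝ)
    (H : ℝ → EuclideanSpace ℝ (Fin n) → ℝ) (t : ℝ)
    (x q : EuclideanSpace ℝ (Fin n)) : EReal :=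
  ((⟪x, q⟫ - ∫ τ in (0:ℝ)..t, H τ q : ℝ) : EReal) - fenchelConj σ q

/-- The set `ℓ(t,x)` of maximizers over `q ∈ ℝⁿ` of `φ(t,x,·)`. -/
def hopfArgmax {n : ℕ} (σ : EuclideanSpace ℝ (Fin n) → ℝ)
    (H : ℝ → EuclideanSpace ℝ (Fin n) → ℝ) (t : ℝ)
    (x : EuclideanSpace ℝ (Fin n)) : Set (EuclideanSpace ℝ (Fin n)) :=
  {q | ∀ q', hopfPhi σ H t x q' ≤ hopfPhi σ H t x q}

/-! Along the characteristic `x(t) = x₀ + ∫_{t₀}^t H_p(τ, p₀) dτ` one has, for every `q`,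
`φ(t, x(t), q) - φ(t, x(t), p₀) = φ(t₀, x₀, q) - φ(t₀, x₀, p₀)
  + ∫_t^{t₀} (H(τ, q) - H(τ, p₀) - ⟨H_p(τ, p₀), q - p₀⟩) dτ`.
The first difference is `≤ 0` because `p₀` maximises `φ(t₀, x₀, ·)`, and the integral is `< 0`
for `q ≠ p₀` by strict concavity of `H(τ, ·)`. The comparison is meaningful in `EReal` because
`σ*(p₀) = ⟨y, p₀⟩ - σ(y)` is finite, `p₀ = ∇σ(y)` being a subgradient of the convex `σ`. -/

open MeasureTheory Set

theorem intervalIntegral.integral_lt_integral_of_ae_lt {f g : ℝ → ℝ} {a b : ℝ} (hab : a < b)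
    (hfi : IntervalIntegrable f volume a b) (hgi : IntervalIntegrable g volume a b)
    (hlt : ∀ᵐ x ∂volume.restrict (Ioc a b), f x < g x) :
    ∫ x in a..b, f x < ∫ x in a..b, g x := by
  refine integral_lt_integral_of_ae_le_of_measure_setOfPred_lt_ne_zero hab.le hfi hgi
    (ae_le_of_ae_lt hlt) ?_
  rw [measure_congr (ae_eq_univ.mpr hlt), Measure.restrict_apply_univ, Real.volume_Ioc]
  simpa using hab

theorem ContinuousOn.intervalIntegrable_section {X F : Type*} [TopologicalSpace X]
    [NormedAddCommGroup F] {H : ℝ → X → F} {a b c d : ℝ}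
    (hH : ContinuousOn (fun z : ℝ × X => H z.1 z.2) (Icc a b ×ˢ univ)) (hc : c ∈ Icc a b)
    (hd : d ∈ Icc a b) (r : X) : IntervalIntegrable (fun τ => H τ r) volume c d :=
  ((hH.comp (continuous_id.prodMk continuous_const).continuousOn fun _ hτ => ⟨hτ, mem_univ r⟩).mono
    (uIcc_subset_Icc hc hd)).intervalIntegrable

section InnerProductSpace

variable {E : Type*} [NormedAddCommGroup E] [InnerProductSpace ℝ E]

theorem norm_le_two_mul_of_le_add_inner {f : E → ℝ} {g p : E} {C : ℝ}
    (hsup : ∀ q, f q ≤ f p + ⟪g, q - p⟫) (hC : ∀ q ∈ Metric.closedBall p 1, |f q| ≤ C) :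
    ‖g‖ ≤ 2 * C := by
  set u := ‖g‖⁻¹ • g
  have hu : ‖u‖ ≤ 1 := by
    rcases eq_or_ne g 0 with rfl | hg
    · simp [u]
    · simp [u, norm_smul, hg]
  have hinner : ⟪g, (p - u) - p⟫ = -‖g‖ := by
    rcases eq_or_ne g 0 with rfl | hg
    · simp
    · rw [sub_sub_cancel_left, inner_neg_right, real_inner_smul_right,
        real_inner_self_eq_norm_sq]
      field_simp
  have hdrop := hsup (p - u)
  rw [hinner] at hdrop
  have hp := hC p (Metric.mem_closedBall_self zero_le_one)
  have hpu := hC (p - u) (by simpa [dist_eq_norm] using hu)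
  linarith [le_abs_self (f p), neg_abs_le (f (p - u))]


variable [CompleteSpace E]

theorem HasGradientAt.hasDerivAt_smul_add {f : E → ℝ} {g y : E} (hf : HasGradientAt f g y)
    (v : E) : HasDerivAt (fun s : ℝ => f (s • v + y)) ⟪g, v⟫ 0 := by
  have hline : HasDerivAt (fun s : ℝ => s • v + y) v 0 := by
    simpa using ((hasDerivAt_id (0 : ℝ)).smul_const v).add_const y
  have hf' : HasFDerivAt f (InnerProductSpace.toDual ℝ E g) ((fun s : ℝ => s • v + y) 0) := by
    simpa using hf.hasFDerivAt
  simpa [Function.comp_def] using hf'.comp_hasDerivAt 0 hline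

theorem ConvexOn.add_inner_le_of_hasGradientAt {f : E → ℝ} (hf : ConvexOn ℝ univ f) {g y : E}
    (hg : HasGradientAt f g y) (x : E) : f y + ⟪g, x - y⟫ ≤ f x := by
  have hline : ConvexOn ℝ univ (fun s : ℝ => f (s • (x - y) + y)) := by
    simpa [Function.comp_def, AffineMap.lineMap_apply] using
      hf.comp_affineMap (AffineMap.lineMap y x : ℝ →ᵃ[ℝ] E)
  have hslope := hline.le_slope_of_hasDerivAt (mem_univ 0) (mem_univ 1) one_pos
    (hg.hasDerivAt_smul_add (x - y))
  simp only [slope_def_field, one_smul, sub_add_cancel, zero_smul, zero_add, sub_zero,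
    div_one] at hslope
  linarith

-- `hopfPhi σ H t x q` is definitionally `hopfPhiSmooth H t x q - fenchelConj σ q`.
noncomputable def hopfPhiSmooth (H : ℝ → E → ℝ) (t : ℝ) (x q : E) : ℝ :=
  ⟪x, q⟫ - ∫ τ in (0 : ℝ)..t, H τ q

theorem hopfPhiSmooth_sub_lt_of_concave {H : ℝ → E → ℝ} {F : ℝ → E} {t t₀ : ℝ}
    (ht : t ∈ Ico 0 t₀) (hH : ∀ r, IntervalIntegrable (fun τ => H τ r) volume 0 t₀)
    (hF : IntervalIntegrable F volume t t₀) {x₀ p q : E}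
    (hconc : ∀ᵐ τ ∂volume.restrict (Ioc t t₀), H τ q - H τ p - ⟪F τ, q - p⟫ < 0) :
    hopfPhiSmooth H t (x₀ + ∫ τ in t₀..t, F τ) q - hopfPhiSmooth H t (x₀ + ∫ τ in t₀..t, F τ) p
      < hopfPhiSmooth H t₀ x₀ q - hopfPhiSmooth H t₀ x₀ p := by
  have hH₁ r : IntervalIntegrable (fun τ => H τ r) volume 0 t :=
    (hH r).mono_set (uIcc_subset_uIcc left_mem_uIcc (mem_uIcc_of_le ht.1 ht.2.le))
  have hH₂ r : IntervalIntegrable (fun τ => H τ r) volume t t₀ :=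
    (hH r).mono_set (uIcc_subset_uIcc (mem_uIcc_of_le ht.1 ht.2.le) right_mem_uIcc)
  have hsplit r :
      ∫ τ in (0 : ℝ)..t, H τ r = (∫ τ in (0 : ℝ)..t₀, H τ r) - ∫ τ in t..t₀, H τ r := by
    rw [← intervalIntegral.integral_add_adjacent_intervals (hH₁ r) (hH₂ r)]
    ring
  have hinner r : ∫ τ in t..t₀, ⟪F τ, r⟫ = ⟪∫ τ in t..t₀, F τ, r⟫ := by
    simpa only [innerSL_apply_apply, real_inner_comm r] using
      (innerSL ℝ r).intervalIntegral_comp_comm hF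
  have hFq : IntervalIntegrable (fun τ => ⟪F τ, q - p⟫) volume t t₀ :=
    ⟨hF.1.inner_const _, hF.2.inner_const _⟩
  have hneg : ∫ τ in t..t₀, (H τ q - H τ p - ⟪F τ, q - p⟫) < 0 := by
    have hint := ((hH₂ q).sub (hH₂ p)).sub hFq
    simpa using intervalIntegral.integral_lt_integral_of_ae_lt ht.2 hint
      intervalIntegrable_const hconc
  rw [intervalIntegral.integral_sub ((hH₂ q).sub (hH₂ p)) hFq,
    intervalIntegral.integral_sub (hH₂ q) (hH₂ p), hinner, inner_sub_right] at hneg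
  simp only [hopfPhiSmooth, hsplit, intervalIntegral.integral_symm (f := F) t t₀, inner_add_left,
    inner_neg_left]
  linarith

variable [FiniteDimensional ℝ E] [MeasurableSpace E] [BorelSpace E]

theorem measurable_gradient_with_param {α : Type*} [TopologicalSpace α] [MeasurableSpace α]
    [OpensMeasurableSpace α] {f : α → E → ℝ} (hf : Continuous f.uncurry) :
    Measurable (fun z : α × E => gradient (f z.1) z.2) :=
  (InnerProductSpace.toDual ℝ E).symm.continuous.measurable.comp
    (measurable_fderiv_with_param ℝ hf)

theorem integrableOn_Ioo_of_hasGradientAt_of_concave {H : ℝ → E → ℝ} {G : ℝ → E} {a b : ℝ}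
    {p : E} (hab : a ≤ b) (hH : ContinuousOn (fun z : ℝ × E => H z.1 z.2) (Icc a b ×ˢ univ))
    (hG : ∀ t ∈ Icc a b, HasGradientAt (H t) (G t) p)
    (hconc : ∀ᵐ t ∂volume.restrict (Ioo a b), ∀ q, H t q ≤ H t p + ⟪G t, q - p⟫) :
    IntegrableOn G (Ioo a b) := by
  have hclamp : Continuous (fun z : ℝ × E => H (projIcc a b hab z.1) z.2) :=
    hH.comp_continuous (((continuous_projIcc (h := hab)).subtype_val.comp continuous_fst).prodMk
      continuous_snd) fun z => ⟨Subtype.prop _, mem_univ _⟩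
  have hmeas : AEStronglyMeasurable G (volume.restrict (Ioo a b)) := by
    refine (((measurable_gradient_with_param (f := fun t => H (projIcc a b hab t)) hclamp).comp
      (measurable_id.prodMk (measurable_const (a := p)))).aestronglyMeasurable).congr ?_
    filter_upwards [ae_restrict_mem measurableSet_Ioo] with t ht
    simp [projIcc_of_mem hab (Ioo_subset_Icc_self ht), (hG t (Ioo_subset_Icc_self ht)).gradient]
  obtain ⟨C, hC⟩ := (isCompact_Icc.prod (isCompact_closedBall p 1)).exists_bound_of_continuousOn
    (hH.mono (prod_mono_right (subset_univ _)))
  refine Integrable.of_bound hmeas (2 * C) ?_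
  filter_upwards [hconc, ae_restrict_mem measurableSet_Ioo] with t hsup ht
  exact norm_le_two_mul_of_le_add_inner hsup fun q hq =>
    hC (t, q) ⟨Ioo_subset_Icc_self ht, hq⟩

end InnerProductSpace

theorem EReal.coe_sub_lt_coe_sub_of_le {a b a₀ b₀ c : ℝ} {s : EReal} (hs : s ≠ ⊥)
    (h₀ : (a₀ : EReal) - s ≤ b₀ - c) (h : a - b < a₀ - b₀) : (a : EReal) - s < b - c := by
  induction s using EReal.rec with
  | bot => exact absurd rfl hs
  | coe s =>
    norm_cast at h₀ ⊢
    linarith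
  | top => simp [← EReal.coe_sub]

section Hopf

variable {n : ℕ}

theorem fenchelConj_ne_bot (σ : EuclideanSpace ℝ (Fin n) → ℝ) (q : EuclideanSpace ℝ (Fin n)) :
    fenchelConj σ q ≠ ⊥ :=
  ne_bot_of_le_ne_bot (EReal.coe_ne_bot _)
    (le_iSup (fun z => ((⟪z, q⟫ - σ z : ℝ) : EReal)) 0)

theorem fenchelConj_eq_of_hasGradientAt {σ : EuclideanSpace ℝ (Fin n) → ℝ}
    (hσ : ConvexOn ℝ univ σ) {g y : EuclideanSpace ℝ (Fin n)} (hg : HasGradientAt σ g y) :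
    fenchelConj σ g = ((⟪y, g⟫ - σ y : ℝ) : EReal) := by
  refine le_antisymm (iSup_le fun z => EReal.coe_le_coe_iff.mpr ?_)
    (le_iSup (fun z => ((⟪z, g⟫ - σ z : ℝ) : EReal)) y)
  have hsupport := hσ.add_inner_le_of_hasGradientAt hg z
  rw [inner_sub_right, real_inner_comm z g, real_inner_comm y g] at hsupport
  linarith

theorem hopfArgmax_eq_singleton_of_lt {σ : EuclideanSpace ℝ (Fin n) → ℝ}
    {H : ℝ → EuclideanSpace ℝ (Fin n) → ℝ} {t : ℝ} {x p : EuclideanSpace ℝ (Fin n)}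
    (h : ∀ q ≠ p, hopfPhi σ H t x q < hopfPhi σ H t x p) : hopfArgmax σ H t x = {p} := by
  refine eq_singleton_iff_unique_mem.mpr ⟨fun q => ?_, fun q hq => ?_⟩
  · rcases eq_or_ne q p with rfl | hq
    · exact le_rfl
    · exact (h q hq).le
  · by_contra hne
    exact (hq p).not_gt (h q hne)

end Hopf

open MeasureTheory in
theorem stmt13_general {n : ℕ} (T : ℝ)
    (σ : EuclideanSpace ℝ (Fin n) → ℝ)
    (hconv : ConvexOn ℝ Set.univ σ) (hσ : ContDiff ℝ 1 σ)
    (H : ℝ → EuclideanSpace ℝ (Fin n) → ℝ)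
    (Hp : ℝ → EuclideanSpace ℝ (Fin n) → EuclideanSpace ℝ (Fin n))
    (hH : ContinuousOn (fun p : ℝ × EuclideanSpace ℝ (Fin n) => H p.1 p.2)
      (Set.Icc 0 T ×ˢ Set.univ))
    (hHp : ∀ t q, HasGradientAt (H t) (Hp t q) q)
    -- strict concavity of H(t,·) for a.e. t ∈ (0,T):
    (hHconc : ∀ᵐ t ∂(volume.restrict (Set.Ioo (0:ℝ) T)),
      ∀ p q : EuclideanSpace ℝ (Fin n), p ≠ q →
        H t p - H t q - ⟪Hp t q, p - q⟫ < 0)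
    (t₀ : ℝ) (ht₀ : t₀ ∈ Set.Ioo 0 T)
    (y x₀ p₀ : EuclideanSpace ℝ (Fin n))
    (hp₀ : p₀ = gradient σ y)
    (hmax : p₀ ∈ hopfArgmax σ H t₀ x₀)
    (x : ℝ → EuclideanSpace ℝ (Fin n))
    (hx : ∀ t, x t = x₀ + ∫ τ in t₀..t, Hp τ p₀) :
    ∀ t ∈ Set.Ico (0:ℝ) t₀, hopfArgmax σ H t (x t) = {p₀} := by
  rintro t ⟨ht0, htt₀⟩
  have hsub : Ioc t t₀ ⊆ Ioo 0 T := fun τ hτ =>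
    ⟨ht0.trans_lt hτ.1, hτ.2.trans_lt ht₀.2⟩
  have hT : 0 ≤ T := (ht₀.1.trans ht₀.2).le
  have hgrad : HasGradientAt σ p₀ y := hp₀ ▸ (hσ.differentiable one_ne_zero y).hasGradientAt
  have hsupergrad : ∀ᵐ τ ∂volume.restrict (Ioo 0 T),
      ∀ q, H τ q ≤ H τ p₀ + ⟪Hp τ p₀, q - p₀⟫ := by
    filter_upwards [hHconc] with τ hτ q
    rcases eq_or_ne q p₀ with rfl | hq
    · simp
    · linarith [hτ q p₀ hq]
  have hF : IntervalIntegrable (fun τ => Hp τ p₀) volume t t₀ :=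
    (intervalIntegrable_iff_integrableOn_Ioc_of_le htt₀.le).mpr <|
      (integrableOn_Ioo_of_hasGradientAt_of_concave hT hH
        (fun τ _ => hHp τ p₀) hsupergrad).mono_set hsub
  refine hopfArgmax_eq_singleton_of_lt fun q hq => ?_
  have hmaxq := hmax q
  rw [hopfPhi, hopfPhi, fenchelConj_eq_of_hasGradientAt hconv hgrad] at hmaxq
  rw [hopfPhi, hopfPhi, fenchelConj_eq_of_hasGradientAt hconv hgrad, hx t]
  refine EReal.coe_sub_lt_coe_sub_of_le (fenchelConj_ne_bot σ q) hmaxq ?_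
  exact hopfPhiSmooth_sub_lt_of_concave ⟨ht0, htt₀⟩
    (hH.intervalIntegrable_section ⟨le_rfl, hT⟩ ⟨ht₀.1.le, ht₀.2.le⟩) hF
    ((ae_restrict_of_ae_restrict_of_subset hsub hHconc).mono fun τ hτ => hτ q p₀ hq)

open MeasureTheory in
theorem stmt13 {n : ℕ} (T : ℝ) (hT : 0 < T) (L : NNReal)
    (σ : EuclideanSpace ℝ (Fin n) → ℝ)
    (hconv : ConvexOn ℝ Set.univ σ) (hσ : ContDiff ℝ 1 σ)
    (hlip : LipschitzWith L σ)
    -- strict convexity of σ*: for p ≠ q and z ∈ ∂σ*(q), ⟨z, p - q⟩ < σ*(p) - σ*(q)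
    (hstrict : ∀ p q z : EuclideanSpace ℝ (Fin n), p ≠ q →
      (∀ w, ((⟪z, w - q⟫ : ℝ) : EReal) + fenchelConj σ q ≤ fenchelConj σ w) →
      ((⟪z, p - q⟫ : ℝ) : EReal) + fenchelConj σ q < fenchelConj σ p)
    (H : ℝ → EuclideanSpace ℝ (Fin n) → ℝ)
    (Hp : ℝ → EuclideanSpace ℝ (Fin n) → EuclideanSpace ℝ (Fin n))
    (hH : ContinuousOn (fun p : ℝ × EuclideanSpace ℝ (Fin n) => H p.1 p.2)
      (Set.Icc 0 T ×ˢ Set.univ))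
    (hHp : ∀ t q, HasGradientAt (H t) (Hp t q) q)
    -- strict concavity of H(t,·) for a.e. t ∈ (0,T):
    (hHconc : ∀ᵐ t ∂(volume.restrict (Set.Ioo (0:ℝ) T)),
      ∀ p q : EuclideanSpace ℝ (Fin n), p ≠ q →
        H t p - H t q - ⟪Hp t q, p - q⟫ < 0)
    (t₀ : ℝ) (ht₀ : t₀ ∈ Set.Ioo 0 T)
    (y x₀ p₀ : EuclideanSpace ℝ (Fin n))
    (hp₀ : p₀ = gradient σ y)
    (hmax : p₀ ∈ hopfArgmax σ H t₀ x₀)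
    (x : ℝ → EuclideanSpace ℝ (Fin n))
    (hx : ∀ t, x t = x₀ + ∫ τ in t₀..t, Hp τ p₀) :
    ∀ t ∈ Set.Ico (0:ℝ) t₀, hopfArgmax σ H t (x t) = {p₀} :=
  stmt13_general T σ hconv hσ H Hp hH hHp hHconc t₀ ht₀ y x₀ p₀ hp₀ hmax x hx
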